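/- arXiv:solv-int/9710014 — 3 statements merged into one kernel-verified Lean document; each statement's English description precedes it below -/
import Mathlib

section
/- Let β_{ij} (i ≠ j) be smooth real functions on ℝ^N satisfying the Darboux equations ∂β_{ij}/∂u_k = β_{ik}β_{kj} for distinct i,j,k, and let ξ_i : ℝ^N → V be smooth solutions of ∂ξ_j/∂u_i = β_{ji} ξ_i (i ≠ j), where V = ℝ^M. Define ξ*_i := (∂ξ_i/∂u_i + Σ_{k≠i} ξ_k β_{ki})ᵀ. Then for i ≠ j, ∂ξ*_j/∂u_i = β_{ij} ξ*_i + (∂β_{ij}/∂u_i + ∂β_{ji}/∂u_j + Σ_{k≠i,j} β_{ki}β_{kj}) ξ_iᵀ. -/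
open scoped BigOperators

/-- Partial derivative of a scalar function on `ℝ^N` in the `i`-th coordinate direction. -/
noncomputable def pd {N : ℕ} (i : Fin N) (f : (Fin N → ℝ) → ℝ) (u : Fin N → ℝ) : ℝ :=
  fderiv ℝ f u (Pi.single i 1)

private lemma pd_add {N : ℕ} (i : Fin N) {f g : (Fin N → ℝ) → ℝ} {u : Fin N → ℝ}
    (hf : DifferentiableAt ℝ f u) (hg : DifferentiableAt ℝ g u) :
    pd i (fun v => f v + g v) u = pd i f u + pd i g u := by
  simp [pd, fderiv_fun_add hf hg]

private lemma pd_mul {N : ℕ} (i : Fin N) {f g : (Fin N → ℝ) → ℝ} {u : Fin N → ℝ}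
    (hf : DifferentiableAt ℝ f u) (hg : DifferentiableAt ℝ g u) :
    pd i (fun v => f v * g v) u = pd i f u * g u + f u * pd i g u := by
  simp [pd, fderiv_fun_mul hf hg]; ring

private lemma pd_sum {N : ℕ} (i : Fin N) {α : Type*} (s : Finset α)
    (f : α → (Fin N → ℝ) → ℝ) {u : Fin N → ℝ}
    (hf : ∀ k ∈ s, DifferentiableAt ℝ (f k) u) :
    pd i (fun v => ∑ k ∈ s, f k v) u = ∑ k ∈ s, pd i (f k) u := by
  simp only [pd, fderiv_fun_sum hf, ContinuousLinearMap.sum_apply]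

private lemma pd_comm {N : ℕ} (i j : Fin N) {f : (Fin N → ℝ) → ℝ}
    (hf : ContDiff ℝ (⊤ : ℕ∞) f) (u : Fin N → ℝ) :
    pd i (fun v => pd j f v) u = pd j (fun v => pd i f v) u := by
  have hdf : Differentiable ℝ f := hf.differentiable (by simp)
  have h1 : ContDiff ℝ (⊤ : ℕ∞) (fderiv ℝ f) := hf.fderiv_right (by simp)
  have h2 : DifferentiableAt ℝ (fderiv ℝ f) u := (h1.differentiable (by simp)) u
  have key : ∀ v w : Fin N → ℝ,
      fderiv ℝ (fderiv ℝ f) u v w = fderiv ℝ (fderiv ℝ f) u w v :=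
    second_derivative_symmetric (fun y => (hdf y).hasFDerivAt) h2.hasFDerivAt
  have ev : ∀ k l : Fin N, pd k (fun v => pd l f v) u
      = fderiv ℝ (fderiv ℝ f) u (Pi.single k 1) (Pi.single l 1) := by
    intro k l
    have he : (fun v => pd l f v) = fun v => (fderiv ℝ f v) (Pi.single l 1) := rfl
    rw [pd, he, fderiv_clm_apply h2 (differentiableAt_const _)]
    simp
  rw [ev, ev, key]

private lemma sum_split {N : ℕ} {i j : Fin N} (h : i ≠ j) (f : Fin N → ℝ) :
    ∑ k ∈ Finset.univ.filter (fun k => k ≠ j), f k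
      = f i + ∑ k ∈ Finset.univ.filter (fun k => k ≠ i ∧ k ≠ j), f k := by
  rw [← Finset.sum_insert (by simp)]
  congr 1
  ext k
  by_cases hk : k = i
  · simp [hk, h]
  · simp [hk]

private lemma sum_split' {N : ℕ} {i j : Fin N} (h : i ≠ j) (f : Fin N → ℝ) :
    ∑ k ∈ Finset.univ.filter (fun k => k ≠ i), f k
      = f j + ∑ k ∈ Finset.univ.filter (fun k => k ≠ i ∧ k ≠ j), f k := by
  rw [← Finset.sum_insert (by simp [h.symm])]
  congr 1
  ext k
  by_cases hk : k = j
  · simp [hk, h.symm]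
  · simp [hk]

theorem adjoint_candidate_derivative
    {N M : ℕ}
    (β : Fin N → Fin N → (Fin N → ℝ) → ℝ)
    (ξ : Fin N → (Fin N → ℝ) → Fin M → ℝ)
    (ξs : Fin N → (Fin N → ℝ) → Fin M → ℝ)
    (hβ : ∀ i j, i ≠ j → ContDiff ℝ (⊤ : ℕ∞) (β i j))
    (hξ : ∀ i a, ContDiff ℝ (⊤ : ℕ∞) (fun u => ξ i u a))
    (hDarboux : ∀ i j k, i ≠ j → j ≠ k → i ≠ k → ∀ u : Fin N → ℝ,
      pd k (β i j) u = β i k u * β k j u)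
    (hdirect : ∀ i j, i ≠ j → ∀ (u : Fin N → ℝ) (a : Fin M),
      pd i (fun v => ξ j v a) u = β j i u * ξ i u a)
    (hξs : ∀ i (u : Fin N → ℝ) (a : Fin M),
      ξs i u a = pd i (fun v => ξ i v a) u
        + ∑ k ∈ Finset.univ.filter (fun k => k ≠ i), ξ k u a * β k i u) :
    ∀ i j, i ≠ j → ∀ (u : Fin N → ℝ) (a : Fin M),
      pd i (fun v => ξs j v a) u
        = β i j u * ξs i u a
          + (pd i (β i j) u + pd j (β j i) u
              + ∑ k ∈ Finset.univ.filter (fun k => k ≠ i ∧ k ≠ j),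
                  β k i u * β k j u) * ξ i u a := by
  intro i j hij u a
  have hji : j ≠ i := hij.symm
  have hβd : ∀ (k l : Fin N), k ≠ l → ∀ v, DifferentiableAt ℝ (β k l) v :=
    fun k l h v => ((hβ k l h).differentiable (by simp)) v
  have hξd : ∀ (k : Fin N) (b : Fin M) (v : Fin N → ℝ),
      DifferentiableAt ℝ (fun w => ξ k w b) v :=
    fun k b v => ((hξ k b).differentiable (by simp)) v
  have hfun : (fun v => ξs j v a)
      = fun v => pd j (fun w => ξ j w a) v
        + ∑ k ∈ Finset.univ.filter (fun k => k ≠ j), ξ k v a * β k j v :=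
    funext fun v => hξs j v a
  rw [hfun]
  have hF : ContDiff ℝ (⊤ : ℕ∞) (fun v => pd j (fun w => ξ j w a) v) :=
    ((hξ j a).fderiv_right (by simp)).clm_apply contDiff_const
  have hGd : DifferentiableAt ℝ
      (fun v => ∑ k ∈ Finset.univ.filter (fun k => k ≠ j), ξ k v a * β k j v) u :=
    DifferentiableAt.fun_sum fun k hk =>
      (hξd k a u).mul (hβd k j (by simpa using hk) u)
  rw [pd_add i ((hF.differentiable (by simp)) u) hGd]
  -- first term: swap derivatives
  have h1 : pd i (fun v => pd j (fun w => ξ j w a) v) u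
      = pd j (β j i) u * ξ i u a + β j i u * (β i j u * ξ j u a) := by
    rw [pd_comm i j (hξ j a)]
    have he : (fun v => pd i (fun w => ξ j w a) v) = fun v => β j i v * ξ i v a :=
      funext fun v => hdirect i j hij v a
    rw [he, pd_mul j (hβd j i hji u) (hξd i a u), hdirect j i hji u a]
  rw [h1]
  -- second term: the sum
  rw [pd_sum i _ _ (fun k hk => (hξd k a u).fun_mul (hβd k j (by simpa using hk) u)),
      sum_split hij,
      pd_mul i (hξd i a u) (hβd i j hij u)]
  have h2 : ∑ k ∈ Finset.univ.filter (fun k => k ≠ i ∧ k ≠ j),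
      pd i (fun v => ξ k v a * β k j v) u
      = ∑ k ∈ Finset.univ.filter (fun k => k ≠ i ∧ k ≠ j),
          (β k i u * ξ i u a * β k j u + ξ k u a * (β k i u * β i j u)) := by
    refine Finset.sum_congr rfl fun k hk => ?_
    simp only [Finset.mem_filter] at hk
    obtain ⟨-, hki, hkj⟩ := hk
    rw [pd_mul i (hξd k a u) (hβd k j hkj u), hdirect i k (Ne.symm hki) u a,
        hDarboux k j i hkj hji hki u]
  rw [h2]
  -- RHS
  rw [hξs i u a, sum_split' hij]
  rw [Finset.sum_add_distrib]
  have h3 : ∑ k ∈ Finset.univ.filter (fun k => k ≠ i ∧ k ≠ j),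
      (β k i u * ξ i u a * β k j u)
      = (∑ k ∈ Finset.univ.filter (fun k => k ≠ i ∧ k ≠ j), β k i u * β k j u)
          * ξ i u a := by
    rw [Finset.sum_mul]; exact Finset.sum_congr rfl fun k _ => by ring
  have h4 : ∑ k ∈ Finset.univ.filter (fun k => k ≠ i ∧ k ≠ j),
      (ξ k u a * (β k i u * β i j u))
      = (∑ k ∈ Finset.univ.filter (fun k => k ≠ i ∧ k ≠ j), ξ k u a * β k i u)
          * β i j u := by
    rw [Finset.sum_mul]; exact Finset.sum_congr rfl fun k _ => by ring
  rw [h3, h4]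
  ring
end

section
/- Under the hypotheses of the vectorial Ribaucour transformation with transformation data satisfying the constraints, if the tangent vectors X_i : ℝ^N → ℝ^N are orthonormal at every point (X_iᵀX_j = δ_{ij}) and solve the full linear system, then the transformed tangent vectors X̂_i := X_i − Ω(X,ξ*)Ω(ξ,ξ*)^{-1}ξ_i, with Ω chosen so that X̂_i(u_0) = X_i(u_0) at some point u_0, are orthonormal at every point: X̂_i(u)ᵀX̂_j(u) = δ_{ij} for all u. -/
open scoped BigOperators

theorem ribaucour_preserves_orthonormality
    {N M : ℕ}
    (β : Fin N → Fin N → (Fin N → ℝ) → ℝ)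
    (X : Fin N → (Fin N → ℝ) → Fin N → ℝ)
    (ξ : Fin N → (Fin N → ℝ) → Fin M → ℝ)
    (ξs : Fin N → (Fin N → ℝ) → Fin M → ℝ)
    (Ω Ωinv : (Fin N → ℝ) → Fin M → Fin M → ℝ)
    (ΩX : (Fin N → ℝ) → Fin N → Fin M → ℝ)
    (Xh : Fin N → (Fin N → ℝ) → Fin N → ℝ)
    (u₀ : Fin N → ℝ)
    (hβ : ∀ i j, i ≠ j → ContDiff ℝ (⊤ : ℕ∞) (β i j))
    (hXsm : ∀ i a, ContDiff ℝ (⊤ : ℕ∞) (fun u => X i u a))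
    (hξ : ∀ i a, ContDiff ℝ (⊤ : ℕ∞) (fun u => ξ i u a))
    (hΩsm : ∀ a b, ContDiff ℝ (⊤ : ℕ∞) (fun u => Ω u a b))
    (hΩinvsm : ∀ a b, ContDiff ℝ (⊤ : ℕ∞) (fun u => Ωinv u a b))
    (hΩXsm : ∀ a b, ContDiff ℝ (⊤ : ℕ∞) (fun u => ΩX u a b))
    -- Lamé equations
    (hLame1 : ∀ i j k, i ≠ j → j ≠ k → i ≠ k → ∀ u : Fin N → ℝ,
      pd k (β i j) u = β i k u * β k j u)
    (hLame2 : ∀ i j, i ≠ j → ∀ u : Fin N → ℝ,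
      pd i (β i j) u + pd j (β j i) u
        + ∑ k ∈ Finset.univ.filter (fun k => k ≠ i ∧ k ≠ j), β k i u * β k j u = 0)
    -- full linear system for the tangent vectors X
    (hoff : ∀ i j, i ≠ j → ∀ (u : Fin N → ℝ) (a : Fin N),
      pd i (fun v => X j v a) u = β j i u * X i u a)
    (hdiag : ∀ i (u : Fin N → ℝ) (a : Fin N),
      pd i (fun v => X i v a) u
        = -∑ k ∈ Finset.univ.filter (fun k => k ≠ i), X k u a * β k i u)
    -- orthonormality of the original basis
    (horth : ∀ (u : Fin N → ℝ) (i j : Fin N),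
      ∑ a, X i u a * X j u a = if i = j then 1 else 0)
    -- Ribaucour data
    (hdirect : ∀ i j, i ≠ j → ∀ (u : Fin N → ℝ) (a : Fin M),
      pd i (fun v => ξ j v a) u = β j i u * ξ i u a)
    (hξs : ∀ i (u : Fin N → ℝ) (a : Fin M),
      ξs i u a = pd i (fun v => ξ i v a) u
        + ∑ k ∈ Finset.univ.filter (fun k => k ≠ i), ξ k u a * β k i u)
    (hΩ : ∀ i (u : Fin N → ℝ) (a b : Fin M),
      pd i (fun v => Ω v a b) u = ξ i u a * ξs i u b)
    (hconstr : ∀ (u : Fin N → ℝ) (a b : Fin M),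
      Ω u a b + Ω u b a = ∑ k, ξ k u a * ξ k u b)
    (hinv₁ : ∀ (u : Fin N → ℝ) (a b : Fin M),
      ∑ c, Ω u a c * Ωinv u c b = if a = b then 1 else 0)
    (hinv₂ : ∀ (u : Fin N → ℝ) (a b : Fin M),
      ∑ c, Ωinv u a c * Ω u c b = if a = b then 1 else 0)
    (hΩX : ∀ i (u : Fin N → ℝ) (b : Fin N) (a : Fin M),
      pd i (fun v => ΩX v b a) u = X i u b * ξs i u a)
    (hΩXconstr : ∀ (u : Fin N → ℝ) (a : Fin M) (b : Fin N),
      ΩX u b a = ∑ k, ξ k u a * X k u b)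
    -- transformed tangent vectors, normalized to agree with X at u₀
    (hXh : ∀ i (u : Fin N → ℝ) (a : Fin N),
      Xh i u a = X i u a - ∑ b, ∑ c, ΩX u a b * Ωinv u b c * ξ i u c)
    (hu₀ : ∀ (i : Fin N) (a : Fin N), Xh i u₀ a = X i u₀ a) :
    ∀ (u : Fin N → ℝ) (i j : Fin N),
      ∑ a, Xh i u a * Xh j u a = if i = j then 1 else 0 := by
  intro u i j
  -- abbreviation for the correction term
  set T : Fin N → Fin N → ℝ := fun l a => ∑ b, ∑ c, ΩX u a b * Ωinv u b c * ξ l u c with hT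
  have hA : ∀ (l : Fin N) (b : Fin M), (∑ a, X l u a * ΩX u a b) = ξ l u b := by
    intro l b
    calc (∑ a, X l u a * ΩX u a b)
        = ∑ a, ∑ k, ξ k u b * (X l u a * X k u a) := by
          refine Finset.sum_congr rfl fun a _ => ?_
          rw [hΩXconstr, Finset.mul_sum]
          exact Finset.sum_congr rfl fun k _ => by ring
      _ = ∑ k, ξ k u b * ∑ a, X l u a * X k u a := by
          rw [Finset.sum_comm]
          exact Finset.sum_congr rfl fun k _ => (Finset.mul_sum _ _ _).symm
      _ = ∑ k, ξ k u b * (if l = k then 1 else 0) := by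
          refine Finset.sum_congr rfl fun k _ => by rw [horth]
      _ = ξ l u b := by simp
  have hB : ∀ b b' : Fin M, (∑ a, ΩX u a b * ΩX u a b') = Ω u b b' + Ω u b' b := by
    intro b b'
    calc (∑ a, ΩX u a b * ΩX u a b')
        = ∑ a, ∑ k, ξ k u b * (X k u a * ΩX u a b') := by
          refine Finset.sum_congr rfl fun a _ => ?_
          rw [hΩXconstr u b, Finset.sum_mul]
          exact Finset.sum_congr rfl fun k _ => by ring
      _ = ∑ k, ξ k u b * ∑ a, X k u a * ΩX u a b' := by
          rw [Finset.sum_comm]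
          exact Finset.sum_congr rfl fun k _ => (Finset.mul_sum _ _ _).symm
      _ = ∑ k, ξ k u b * ξ k u b' := by
          refine Finset.sum_congr rfl fun k _ => by rw [hA]
      _ = Ω u b b' + Ω u b' b := (hconstr u b b').symm
  -- cross term
  have hcross : ∀ l m : Fin N, (∑ a, X l u a * T m a)
      = ∑ b, ∑ c, ξ l u b * Ωinv u b c * ξ m u c := by
    intro l m
    calc (∑ a, X l u a * T m a)
        = ∑ a, ∑ b, ∑ c, (X l u a * ΩX u a b) * (Ωinv u b c * ξ m u c) := by
          refine Finset.sum_congr rfl fun a _ => ?_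
          rw [hT, Finset.mul_sum]
          refine Finset.sum_congr rfl fun b _ => ?_
          rw [Finset.mul_sum]
          exact Finset.sum_congr rfl fun c _ => by ring
      _ = ∑ b, ∑ c, (∑ a, X l u a * ΩX u a b) * (Ωinv u b c * ξ m u c) := by
          rw [Finset.sum_comm]
          refine Finset.sum_congr rfl fun b _ => ?_
          rw [Finset.sum_comm]
          exact Finset.sum_congr rfl fun c _ => (Finset.sum_mul _ _ _).symm
      _ = ∑ b, ∑ c, ξ l u b * Ωinv u b c * ξ m u c := by
          refine Finset.sum_congr rfl fun b _ => Finset.sum_congr rfl fun c _ => ?_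
          rw [hA]; ring
  -- quadratic term
  have hquad : (∑ a, T i a * T j a)
      = (∑ b, ∑ c, ξ j u b * Ωinv u b c * ξ i u c)
        + (∑ b, ∑ c, ξ i u b * Ωinv u b c * ξ j u c) := by
    calc (∑ a, T i a * T j a)
        = ∑ a, ∑ b, ∑ c, ∑ b', ∑ c',
            (ΩX u a b * ΩX u a b') * (Ωinv u b c * ξ i u c * (Ωinv u b' c' * ξ j u c')) := by
          refine Finset.sum_congr rfl fun a _ => ?_
          rw [hT, Finset.sum_mul]
          refine Finset.sum_congr rfl fun b _ => ?_
          rw [Finset.sum_mul]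
          refine Finset.sum_congr rfl fun c _ => ?_
          rw [Finset.mul_sum]
          refine Finset.sum_congr rfl fun b' _ => ?_
          rw [Finset.mul_sum]
          exact Finset.sum_congr rfl fun c' _ => by ring
      _ = ∑ b, ∑ c, ∑ b', ∑ c',
            (∑ a, ΩX u a b * ΩX u a b') * (Ωinv u b c * ξ i u c * (Ωinv u b' c' * ξ j u c')) := by
          rw [Finset.sum_comm]
          refine Finset.sum_congr rfl fun b _ => ?_
          rw [Finset.sum_comm]
          refine Finset.sum_congr rfl fun c _ => ?_
          rw [Finset.sum_comm]
          refine Finset.sum_congr rfl fun b' _ => ?_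
          rw [Finset.sum_comm]
          exact Finset.sum_congr rfl fun c' _ => (Finset.sum_mul _ _ _).symm
      _ = ∑ b, ∑ c, ∑ b', ∑ c',
            ((Ω u b b' * Ωinv u b' c') * (Ωinv u b c * ξ i u c * ξ j u c')
             + (Ω u b' b * Ωinv u b c) * (ξ i u c * (Ωinv u b' c' * ξ j u c'))) := by
          refine Finset.sum_congr rfl fun b _ => Finset.sum_congr rfl fun c _ =>
            Finset.sum_congr rfl fun b' _ => Finset.sum_congr rfl fun c' _ => ?_
          rw [hB]; ring
      _ = (∑ b, ∑ c, ∑ b', ∑ c',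
            (Ω u b b' * Ωinv u b' c') * (Ωinv u b c * ξ i u c * ξ j u c'))
          + (∑ b, ∑ c, ∑ b', ∑ c',
            (Ω u b' b * Ωinv u b c) * (ξ i u c * (Ωinv u b' c' * ξ j u c'))) := by
          simp [Finset.sum_add_distrib]
      _ = (∑ b, ∑ c, ξ j u b * Ωinv u b c * ξ i u c)
          + (∑ b, ∑ c, ξ i u b * Ωinv u b c * ξ j u c) := by
          congr 1
          · -- first piece: sum b' c' of Ω b b' Ωinv b' c' = δ_{b c'}
            calc (∑ b, ∑ c, ∑ b', ∑ c',
                    (Ω u b b' * Ωinv u b' c') * (Ωinv u b c * ξ i u c * ξ j u c'))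
                = ∑ b, ∑ c, ∑ c',
                    (∑ b', Ω u b b' * Ωinv u b' c') * (Ωinv u b c * ξ i u c * ξ j u c') := by
                  refine Finset.sum_congr rfl fun b _ => Finset.sum_congr rfl fun c _ => ?_
                  rw [Finset.sum_comm]
                  exact Finset.sum_congr rfl fun c' _ => (Finset.sum_mul _ _ _).symm
              _ = ∑ b, ∑ c, ∑ c',
                    (if b = c' then (1:ℝ) else 0) * (Ωinv u b c * ξ i u c * ξ j u c') := by
                  refine Finset.sum_congr rfl fun b _ => Finset.sum_congr rfl fun c _ =>
                    Finset.sum_congr rfl fun c' _ => by rw [hinv₁]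
              _ = ∑ b, ∑ c, ξ j u b * Ωinv u b c * ξ i u c := by
                  refine Finset.sum_congr rfl fun b _ => Finset.sum_congr rfl fun c _ => ?_
                  simp [Finset.sum_ite_eq, mul_comm, mul_assoc, mul_left_comm]
          · have perm : ∀ (f : Fin M → Fin M → Fin M → Fin M → ℝ),
                (∑ b, ∑ c, ∑ b', ∑ c', f b c b' c')
                  = ∑ b', ∑ c', ∑ c, ∑ b, f b c b' c' := by
              intro f
              calc (∑ b, ∑ c, ∑ b', ∑ c', f b c b' c')
                  = ∑ c, ∑ b', ∑ c', ∑ b, f b c b' c' := by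
                    rw [Finset.sum_comm]
                    refine Finset.sum_congr rfl fun c _ => ?_
                    rw [Finset.sum_comm]
                    refine Finset.sum_congr rfl fun b' _ => ?_
                    rw [Finset.sum_comm]
                _ = ∑ b', ∑ c, ∑ c', ∑ b, f b c b' c' := Finset.sum_comm
                _ = ∑ b', ∑ c', ∑ c, ∑ b, f b c b' c' :=
                    Finset.sum_congr rfl fun b' _ => Finset.sum_comm
            calc (∑ b, ∑ c, ∑ b', ∑ c',
                    (Ω u b' b * Ωinv u b c) * (ξ i u c * (Ωinv u b' c' * ξ j u c')))
                = ∑ b', ∑ c', ∑ c, ∑ b,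
                    (Ω u b' b * Ωinv u b c) * (ξ i u c * (Ωinv u b' c' * ξ j u c')) :=
                  perm _
              _ = ∑ b', ∑ c', ∑ c,
                    (∑ b, Ω u b' b * Ωinv u b c) * (ξ i u c * (Ωinv u b' c' * ξ j u c')) := by
                  refine Finset.sum_congr rfl fun b' _ => Finset.sum_congr rfl fun c' _ =>
                    Finset.sum_congr rfl fun c _ => (Finset.sum_mul _ _ _).symm
              _ = ∑ b', ∑ c', ∑ c,
                    (if b' = c then (1:ℝ) else 0) * (ξ i u c * (Ωinv u b' c' * ξ j u c')) := by
                  refine Finset.sum_congr rfl fun b' _ => Finset.sum_congr rfl fun c' _ =>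
                    Finset.sum_congr rfl fun c _ => by rw [hinv₁]
              _ = ∑ b, ∑ c, ξ i u b * Ωinv u b c * ξ j u c := by
                  refine Finset.sum_congr rfl fun b' _ => Finset.sum_congr rfl fun c' _ => ?_
                  simp [Finset.sum_ite_eq, mul_comm, mul_assoc, mul_left_comm]
  -- put it all together
  have hexp : (∑ a, Xh i u a * Xh j u a)
      = (∑ a, X i u a * X j u a) - (∑ a, X i u a * T j a) - (∑ a, X j u a * T i a)
        + (∑ a, T i a * T j a) := by
    simp only [hXh, hT]
    rw [← Finset.sum_sub_distrib, ← Finset.sum_sub_distrib, ← Finset.sum_add_distrib]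
    exact Finset.sum_congr rfl fun a _ => by ring
  rw [hexp, hcross, hcross, hquad, horth]
  ring
end

section
/- Let β satisfy the Lamé equations and let data (ξ_{i,(1)} ∈ ℝ^{M₁}, ξ_{i,(2)} ∈ ℝ^{M₂}) both solve the direct system, with ξ*_{i,(s)} given by the Ribaucour prescription and potentials satisfying the symmetry constraints Ω(ξ_{(s)},ξ*_{(s)}) + Ω(ξ_{(s)},ξ*_{(s)})ᵀ = Σ_k ξ_{k,(s)}⊗ξ_{k,(s)}ᵀ (s=1,2) and Ω(ξ_{(1)},ξ*_{(2)}) + Ω(ξ_{(2)},ξ*_{(1)})ᵀ = Σ_k ξ_{k,(1)}⊗ξ_{k,(2)}ᵀ. Then the first-step Ribaucour transform with data (ℝ^{M₂}, ξ_{i,(2)}) produces transformed quantities ξ'_{i,(1)} := ξ_{i,(1)} − Ω(ξ_{(1)},ξ*_{(2)})Ω(ξ_{(2)},ξ*_{(2)})^{-1}ξ_{i,(2)} and Ω' := Ω(ξ_{(1)},ξ*_{(1)}) − Ω(ξ_{(1)},ξ*_{(2)})Ω(ξ_{(2)},ξ*_{(2)})^{-1}Ω(ξ_{(2)},ξ*_{(1)})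 which satisfy the Ribaucour symmetry constraint: Ω' + (Ω')ᵀ = Σ_k ξ'_{k,(1)} ⊗ (ξ'_{k,(1)})ᵀ. -/
open scoped BigOperators

open Matrix

lemma vecMulVec_sub_sub {m n : Type*} (x y : m → ℝ) (z w : n → ℝ) :
    vecMulVec (x - y) (z - w)
      = vecMulVec x z - vecMulVec x w - vecMulVec y z + vecMulVec y w := by
  ext i j
  simp [vecMulVec_apply]
  ring

lemma vecMulVec_mulVec_left {m n p : Type*} [Fintype n]
    (F : Matrix m n ℝ) (w : n → ℝ) (x : p → ℝ) :
    vecMulVec (F.mulVec w) x = F * vecMulVec w x := by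
  ext i j
  simp [vecMulVec_apply, Matrix.mul_apply, mulVec, dotProduct, Finset.sum_mul, mul_assoc]

lemma vecMulVec_mulVec_right {m n p : Type*} [Fintype n]
    (F : Matrix p n ℝ) (w : n → ℝ) (x : m → ℝ) :
    vecMulVec x (F.mulVec w) = vecMulVec x w * Fᵀ := by
  ext i j
  simp [vecMulVec_apply, Matrix.mul_apply, mulVec, dotProduct, Finset.mul_sum]
  congr 1; ext c; ring

lemma perm_key {m₁ m₂ : Type*} {n : ℕ} [Fintype m₁] [Fintype m₂] [DecidableEq m₂]
    (A : Matrix m₁ m₁ ℝ) (B : Matrix m₁ m₂ ℝ) (C : Matrix m₂ m₁ ℝ)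
    (D E : Matrix m₂ m₂ ℝ)
    (v : Fin n → m₁ → ℝ) (w : Fin n → m₂ → ℝ)
    (hA : A + Aᵀ = ∑ k, vecMulVec (v k) (v k))
    (hD : D + Dᵀ = ∑ k, vecMulVec (w k) (w k))
    (hBC : B + Cᵀ = ∑ k, vecMulVec (v k) (w k))
    (hED : E * D = 1) :
    (A - B * E * C) + (A - B * E * C)ᵀ
      = ∑ k, vecMulVec (v k - (B * E).mulVec (w k)) (v k - (B * E).mulVec (w k)) := by
  set F := B * E with hF
  have hFD : F * D = B := by
    rw [hF, Matrix.mul_assoc, hED, Matrix.mul_one]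
  have hexp : ∀ k : Fin n,
      vecMulVec (v k - F.mulVec (w k)) (v k - F.mulVec (w k))
        = vecMulVec (v k) (v k) - vecMulVec (v k) (w k) * Fᵀ
          - F * vecMulVec (w k) (v k) + F * vecMulVec (w k) (w k) * Fᵀ := by
    intro k
    rw [vecMulVec_sub_sub, vecMulVec_mulVec_left, vecMulVec_mulVec_right,
      vecMulVec_mulVec_left, vecMulVec_mulVec_right]
    simp only [Matrix.mul_assoc]
  have hsum :
      (∑ k, vecMulVec (v k - F.mulVec (w k)) (v k - F.mulVec (w k)))
        = (∑ k, vecMulVec (v k) (v k)) - (∑ k, vecMulVec (v k) (w k)) * Fᵀ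
          - F * (∑ k, vecMulVec (w k) (v k)) + F * (∑ k, vecMulVec (w k) (w k)) * Fᵀ := by
    simp only [hexp, Finset.sum_add_distrib, Finset.sum_sub_distrib]
    simp only [Matrix.sum_mul, Matrix.mul_sum]
  have hwv : (∑ k, vecMulVec (w k) (v k)) = (∑ k : Fin n, vecMulVec (v k) (w k))ᵀ := by
    rw [Matrix.transpose_sum]
    congr 1; ext k i j; simp [vecMulVec_apply]; ring
  rw [hsum, ← hA, ← hD, ← hBC, hwv, ← hBC]
  have hFDT : Dᵀ * Fᵀ = Bᵀ := by rw [← Matrix.transpose_mul, hFD]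
  have expand : F * (D + Dᵀ) * Fᵀ = B * Fᵀ + F * Bᵀ := by
    rw [Matrix.mul_add, Matrix.add_mul, hFD, Matrix.mul_assoc, hFDT]
  rw [expand]
  simp only [Matrix.transpose_sub, Matrix.transpose_mul, Matrix.transpose_add,
    Matrix.transpose_transpose, Matrix.mul_add, Matrix.add_mul, Matrix.mul_assoc]
  abel

theorem permutability_symmetry_constraint
    {N M₁ M₂ : ℕ}
    (β : Fin N → Fin N → (Fin N → ℝ) → ℝ)
    (ξ₁ : Fin N → (Fin N → ℝ) → Fin M₁ → ℝ)
    (ξ₂ : Fin N → (Fin N → ℝ) → Fin M₂ → ℝ)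
    (ξs₁ : Fin N → (Fin N → ℝ) → Fin M₁ → ℝ)
    (ξs₂ : Fin N → (Fin N → ℝ) → Fin M₂ → ℝ)
    (Ω₁₁ : (Fin N → ℝ) → Fin M₁ → Fin M₁ → ℝ)
    (Ω₁₂ : (Fin N → ℝ) → Fin M₁ → Fin M₂ → ℝ)
    (Ω₂₁ : (Fin N → ℝ) → Fin M₂ → Fin M₁ → ℝ)
    (Ω₂₂ Ωinv₂₂ : (Fin N → ℝ) → Fin M₂ → Fin M₂ → ℝ)
    (ξ₁' : Fin N → (Fin N → ℝ) → Fin M₁ → ℝ)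
    (Ω' : (Fin N → ℝ) → Fin M₁ → Fin M₁ → ℝ)
    (hβ : ∀ i j, i ≠ j → ContDiff ℝ (⊤ : ℕ∞) (β i j))
    (hξ₁ : ∀ i a, ContDiff ℝ (⊤ : ℕ∞) (fun u => ξ₁ i u a))
    (hξ₂ : ∀ i a, ContDiff ℝ (⊤ : ℕ∞) (fun u => ξ₂ i u a))
    -- Lamé equations
    (hLame1 : ∀ i j k, i ≠ j → j ≠ k → i ≠ k → ∀ u : Fin N → ℝ,
      pd k (β i j) u = β i k u * β k j u)
    (hLame2 : ∀ i j, i ≠ j → ∀ u : Fin N → ℝ,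
      pd i (β i j) u + pd j (β j i) u
        + ∑ k ∈ Finset.univ.filter (fun k => k ≠ i ∧ k ≠ j), β k i u * β k j u = 0)
    -- direct systems
    (hdirect₁ : ∀ i j, i ≠ j → ∀ (u : Fin N → ℝ) (a : Fin M₁),
      pd i (fun v => ξ₁ j v a) u = β j i u * ξ₁ i u a)
    (hdirect₂ : ∀ i j, i ≠ j → ∀ (u : Fin N → ℝ) (a : Fin M₂),
      pd i (fun v => ξ₂ j v a) u = β j i u * ξ₂ i u a)
    -- Ribaucour prescription for the adjoints
    (hξs₁ : ∀ i (u : Fin N → ℝ) (a : Fin M₁),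
      ξs₁ i u a = pd i (fun v => ξ₁ i v a) u
        + ∑ k ∈ Finset.univ.filter (fun k => k ≠ i), ξ₁ k u a * β k i u)
    (hξs₂ : ∀ i (u : Fin N → ℝ) (a : Fin M₂),
      ξs₂ i u a = pd i (fun v => ξ₂ i v a) u
        + ∑ k ∈ Finset.univ.filter (fun k => k ≠ i), ξ₂ k u a * β k i u)
    -- potentials
    (hΩ₁₁ : ∀ i (u : Fin N → ℝ) (a b : Fin M₁),
      pd i (fun v => Ω₁₁ v a b) u = ξ₁ i u a * ξs₁ i u b)
    (hΩ₁₂ : ∀ i (u : Fin N → ℝ) (a : Fin M₁) (b : Fin M₂),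
      pd i (fun v => Ω₁₂ v a b) u = ξ₁ i u a * ξs₂ i u b)
    (hΩ₂₁ : ∀ i (u : Fin N → ℝ) (a : Fin M₂) (b : Fin M₁),
      pd i (fun v => Ω₂₁ v a b) u = ξ₂ i u a * ξs₁ i u b)
    (hΩ₂₂ : ∀ i (u : Fin N → ℝ) (a b : Fin M₂),
      pd i (fun v => Ω₂₂ v a b) u = ξ₂ i u a * ξs₂ i u b)
    -- symmetry constraints
    (hconstr₁ : ∀ (u : Fin N → ℝ) (a b : Fin M₁),
      Ω₁₁ u a b + Ω₁₁ u b a = ∑ k, ξ₁ k u a * ξ₁ k u b)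
    (hconstr₂ : ∀ (u : Fin N → ℝ) (a b : Fin M₂),
      Ω₂₂ u a b + Ω₂₂ u b a = ∑ k, ξ₂ k u a * ξ₂ k u b)
    (hconstr₁₂ : ∀ (u : Fin N → ℝ) (a : Fin M₁) (b : Fin M₂),
      Ω₁₂ u a b + Ω₂₁ u b a = ∑ k, ξ₁ k u a * ξ₂ k u b)
    -- invertibility of Ω(ξ₍₂₎,ξ*₍₂₎)
    (hinv₁ : ∀ (u : Fin N → ℝ) (a b : Fin M₂),
      ∑ c, Ω₂₂ u a c * Ωinv₂₂ u c b = if a = b then 1 else 0)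
    (hinv₂ : ∀ (u : Fin N → ℝ) (a b : Fin M₂),
      ∑ c, Ωinv₂₂ u a c * Ω₂₂ u c b = if a = b then 1 else 0)
    -- first-step Ribaucour transforms
    (hξ₁' : ∀ i (u : Fin N → ℝ) (a : Fin M₁),
      ξ₁' i u a = ξ₁ i u a - ∑ b, ∑ c, Ω₁₂ u a b * Ωinv₂₂ u b c * ξ₂ i u c)
    (hΩ' : ∀ (u : Fin N → ℝ) (a d : Fin M₁),
      Ω' u a d = Ω₁₁ u a d - ∑ b, ∑ c, Ω₁₂ u a b * Ωinv₂₂ u b c * Ω₂₁ u c d) :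
    ∀ (u : Fin N → ℝ) (a b : Fin M₁),
      Ω' u a b + Ω' u b a = ∑ k, ξ₁' k u a * ξ₁' k u b := by
  intro u a b
  classical
  set A : Matrix (Fin M₁) (Fin M₁) ℝ := Matrix.of (Ω₁₁ u) with hAdef
  set B : Matrix (Fin M₁) (Fin M₂) ℝ := Matrix.of (Ω₁₂ u) with hBdef
  set C : Matrix (Fin M₂) (Fin M₁) ℝ := Matrix.of (Ω₂₁ u) with hCdef
  set D : Matrix (Fin M₂) (Fin M₂) ℝ := Matrix.of (Ω₂₂ u) with hDdef
  set E : Matrix (Fin M₂) (Fin M₂) ℝ := Matrix.of (Ωinv₂₂ u) with hEdef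
  set v : Fin N → Fin M₁ → ℝ := fun k => ξ₁ k u with hvdef
  set w : Fin N → Fin M₂ → ℝ := fun k => ξ₂ k u with hwdef
  have hED : E * D = 1 := by
    ext c d
    simp [Matrix.mul_apply, Matrix.one_apply, hEdef, hDdef, hinv₂ u]
  have hA : A + Aᵀ = ∑ k, Matrix.vecMulVec (v k) (v k) := by
    ext i j
    simp [Matrix.add_apply, Matrix.transpose_apply, Matrix.sum_apply,
      Matrix.vecMulVec_apply, hAdef, hvdef, hconstr₁ u i j]
  have hD : D + Dᵀ = ∑ k, Matrix.vecMulVec (w k) (w k) := by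
    ext i j
    simp [Matrix.add_apply, Matrix.transpose_apply, Matrix.sum_apply,
      Matrix.vecMulVec_apply, hDdef, hwdef, hconstr₂ u i j]
  have hBC : B + Cᵀ = ∑ k, Matrix.vecMulVec (v k) (w k) := by
    ext i j
    simp [Matrix.add_apply, Matrix.transpose_apply, Matrix.sum_apply,
      Matrix.vecMulVec_apply, hBdef, hCdef, hvdef, hwdef, hconstr₁₂ u i j]
  have key := perm_key A B C D E v w hA hD hBC hED
  have hBEC : ∀ (a' d : Fin M₁),
      (B * E * C) a' d = ∑ i, ∑ j, Ω₁₂ u a' i * Ωinv₂₂ u i j * Ω₂₁ u j d := by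
    intro a' d
    simp only [Matrix.mul_apply, Finset.sum_mul]
    rw [Finset.sum_comm]
    refine Finset.sum_congr rfl fun i _ => Finset.sum_congr rfl fun j _ => ?_
    simp [hBdef, hEdef, hCdef, mul_assoc]
  have hL : ∀ (a' d : Fin M₁), Ω' u a' d = (A - B * E * C) a' d := by
    intro a' d
    rw [hΩ' u a' d, Matrix.sub_apply, hBEC]
    simp [hAdef]
  have hx : ∀ (k : Fin N) (a' : Fin M₁),
      ξ₁' k u a' = (v k - (B * E).mulVec (w k)) a' := by
    intro k a'
    rw [hξ₁' k u a']
    simp only [Pi.sub_apply, Matrix.mulVec, dotProduct, Matrix.mul_apply,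
      Finset.sum_mul, hvdef]
    rw [Finset.sum_comm]
    congr 1
  have h2 := congrFun (congrFun key a) b
  calc Ω' u a b + Ω' u b a
      = (A - B * E * C) a b + (A - B * E * C) b a := by rw [hL, hL]
    _ = ∑ k, (v k - (B * E).mulVec (w k)) a * (v k - (B * E).mulVec (w k)) b := by
        simpa only [Matrix.add_apply, Matrix.sub_apply, Matrix.transpose_apply,
          Matrix.sum_apply, Matrix.vecMulVec_apply, Pi.sub_apply] using h2
    _ = ∑ k, ξ₁' k u a * ξ₁' k u b := by
        refine Finset.sum_congr rfl fun k _ => ?_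
        rw [hx, hx]
end
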